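/- arXiv:2008.06349 — 6 statements merged into one kernel-verified Lean document; each statement's English description precedes it below -/
import Mathlib

section
/- Let f : (0,∞) → (0,∞) be infinitely differentiable. The following are equivalent: (i) −f′/f is completely monotonic on (0,∞); (ii) for every real c > 0 the function x ↦ f(x)^c is completely monotonic on (0,∞); (iii) for every positive integer n the function x ↦ f(x)^{1/n} is completely monotonic on (0,∞). -/
open Set Filter Finset Topology

namespace Horn

lemma iter_eq (u : ℝ → ℝ) (n : ℕ) {x : ℝ} (hx : x ∈ Set.Ioi (0:ℝ)) :
    iteratedDerivWithin n u (Set.Ioi 0) x = iteratedDeriv n u x := by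
  rw [iteratedDerivWithin_eq_iteratedFDerivWithin, iteratedDeriv_eq_iteratedFDeriv,
    iteratedFDerivWithin_of_isOpen n isOpen_Ioi hx]

lemma smooth_iter {u : ℝ → ℝ} (hu : ContDiffOn ℝ (⊤ : ℕ∞) u (Ioi 0)) (m : ℕ) :
    ContDiffOn ℝ (⊤ : ℕ∞) (iteratedDeriv m u) (Ioi 0) := by
  induction m with
  | zero => simpa [iteratedDeriv_zero] using hu
  | succ m ih =>
    rw [iteratedDeriv_succ]
    exact ih.deriv_of_isOpen isOpen_Ioi (by simp)

lemma diffAt {u : ℝ → ℝ} (hu : ContDiffOn ℝ (⊤ : ℕ∞) u (Ioi 0)) {x : ℝ} (hx : x ∈ Ioi (0:ℝ)) :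
    DifferentiableAt ℝ u x :=
  (hu.contDiffAt (isOpen_Ioi.mem_nhds hx)).differentiableAt (by simp)

lemma eqOn_iter {u v : ℝ → ℝ} (huv : Set.EqOn u v (Ioi 0)) (n : ℕ) {x : ℝ}
    (hx : x ∈ Ioi (0:ℝ)) : iteratedDeriv n u x = iteratedDeriv n v x := by
  rw [← iter_eq u n hx, ← iter_eq v n hx]
  exact iteratedDerivWithin_congr huv hx

lemma leibniz {u v : ℝ → ℝ} (hu : ContDiffOn ℝ (⊤ : ℕ∞) u (Ioi 0)) (hv : ContDiffOn ℝ (⊤ : ℕ∞) v (Ioi 0))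
    (n : ℕ) : ∀ x ∈ Ioi (0:ℝ),
    iteratedDeriv n (fun y => u y * v y) x
      = ∑ i ∈ Finset.range (n+1),
          (n.choose i : ℝ) * (iteratedDeriv i u x * iteratedDeriv (n-i) v x) := by
  induction n with
  | zero => intro x hx; simp [iteratedDeriv_zero]
  | succ n ih =>
    intro x hx
    have hloc : Ioi (0:ℝ) ∈ nhds x := isOpen_Ioi.mem_nhds hx
    have heq : (fun y => ∑ i ∈ Finset.range (n+1),
        (n.choose i : ℝ) * (iteratedDeriv i u y * iteratedDeriv (n-i) v y))
        =ᶠ[nhds x] iteratedDeriv n (fun y => u y * v y) :=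
      eventually_of_mem hloc fun y hy => (ih y hy).symm
    rw [iteratedDeriv_succ, ← heq.deriv_eq]
    have hder : ∀ i : ℕ, HasDerivAt (fun y => (n.choose i : ℝ) *
        (iteratedDeriv i u y * iteratedDeriv (n-i) v y))
        ((n.choose i : ℝ) * (iteratedDeriv (i+1) u x * iteratedDeriv (n-i) v x
          + iteratedDeriv i u x * iteratedDeriv (n-i+1) v x)) x := by
      intro i
      have h1 : HasDerivAt (iteratedDeriv i u) (iteratedDeriv (i+1) u x) x := by
        rw [iteratedDeriv_succ]
        exact (diffAt (smooth_iter hu i) hx).hasDerivAt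
      have h2 : HasDerivAt (iteratedDeriv (n-i) v) (iteratedDeriv (n-i+1) v x) x := by
        rw [iteratedDeriv_succ]
        exact (diffAt (smooth_iter hv (n-i)) hx).hasDerivAt
      exact (h1.mul h2).const_mul _
    rw [(HasDerivAt.fun_sum (fun i _ => hder i)).deriv]
    have key := Finset.sum_choose_succ_mul
      (fun i j => iteratedDeriv i u x * iteratedDeriv j v x) n
    rw [key]
    rw [← Finset.sum_add_distrib]
    apply Finset.sum_congr rfl
    intro i hi
    have hin : i ≤ n := Nat.lt_succ_iff.mp (Finset.mem_range.mp hi)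
    have : n - i + 1 = n + 1 - i := by omega
    rw [this]; ring


lemma sign_lemma {g u : ℝ → ℝ} (hg : ContDiffOn ℝ (⊤ : ℕ∞) g (Ioi 0))
    (hgs : ∀ k : ℕ, ∀ x ∈ Ioi (0:ℝ), 0 ≤ (-1:ℝ)^k * iteratedDeriv k g x)
    (hu : ContDiffOn ℝ (⊤ : ℕ∞) u (Ioi 0)) (hupos : ∀ x ∈ Ioi (0:ℝ), 0 < u x)
    (hud : ∀ x ∈ Ioi (0:ℝ), deriv u x = -(g x * u x)) :
    ∀ n : ℕ, ∀ x ∈ Ioi (0:ℝ), 0 ≤ (-1:ℝ)^n * iteratedDeriv n u x := by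
  intro n
  induction n using Nat.strong_induction_on with
  | _ n ih =>
    match n with
    | 0 =>
      intro x hx
      simpa [iteratedDeriv_zero] using (hupos x hx).le
    | (m+1) =>
      intro x hx
      have e1 : iteratedDeriv (m+1) u x = iteratedDeriv m (fun y => -(g y * u y)) x := by
        rw [iteratedDeriv_succ']
        exact eqOn_iter (fun y hy => hud y hy) m hx
      rw [e1, iteratedDeriv_fun_neg, leibniz hg hu m x hx]
      have e2 : (-1:ℝ)^(m+1) * -(∑ i ∈ Finset.range (m+1),
          (m.choose i : ℝ) * (iteratedDeriv i g x * iteratedDeriv (m-i) u x))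
          = ∑ i ∈ Finset.range (m+1), (-1:ℝ)^m *
            ((m.choose i : ℝ) * (iteratedDeriv i g x * iteratedDeriv (m-i) u x)) := by
        rw [← Finset.mul_sum, pow_succ]; ring
      rw [e2]
      apply Finset.sum_nonneg
      intro i hi
      have hin : i + (m - i) = m := by
        have := Nat.lt_succ_iff.mp (Finset.mem_range.mp hi); omega
      have e3 : (-1:ℝ)^m * ((m.choose i : ℝ) * (iteratedDeriv i g x * iteratedDeriv (m-i) u x))
          = (m.choose i : ℝ) * (((-1:ℝ)^i * iteratedDeriv i g x) *
              ((-1:ℝ)^(m-i) * iteratedDeriv (m-i) u x)) := by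
        have hp : (-1:ℝ)^m = (-1:ℝ)^i * (-1:ℝ)^(m-i) := by rw [← pow_add, hin]
        rw [hp]; ring
      rw [e3]
      exact mul_nonneg (by positivity)
        (mul_nonneg (hgs i x hx) (ih (m-i) (by omega) x hx))

noncomputable def coef (h : ℝ → ℝ) : ℕ → ℕ → ℝ → ℝ
  | 0, 0 => fun _ => 1
  | 0, _+1 => fun _ => 0
  | m+1, 0 => deriv (coef h m 0)
  | m+1, j+1 => fun x => deriv (coef h m (j+1)) x + deriv h x * coef h m j x

lemma coef_eq_zero_of_lt (h : ℝ → ℝ) : ∀ m j : ℕ, m < j → coef h m j = fun _ => 0 := by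
  intro m
  induction m with
  | zero =>
    intro j hj
    match j, hj with
    | (k+1), _ => rfl
  | succ m ih =>
    intro j hj
    match j, hj with
    | (k+1), hj =>
      have h1 : coef h m (k+1) = fun _ => 0 := ih (k+1) (by omega)
      have h2 : coef h m k = fun _ => 0 := ih k (by omega)
      show (fun x => deriv (coef h m (k+1)) x + deriv h x * coef h m k x) = fun _ => 0
      funext x
      rw [h1, h2]
      simp

lemma coef_zero_eq_zero (h : ℝ → ℝ) : ∀ m : ℕ, coef h (m+1) 0 = fun _ => 0 := by
  intro m
  induction m with
  | zero =>
    show deriv (coef h 0 0) = fun _ => 0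
    show deriv (fun _ => (1:ℝ)) = fun _ => 0
    funext x; simp
  | succ m ih =>
    show deriv (coef h (m+1) 0) = fun _ => 0
    rw [ih]
    funext x; simp

lemma coef_smooth {h : ℝ → ℝ} (hh : ContDiffOn ℝ (⊤ : ℕ∞) h (Ioi 0)) :
    ∀ m j : ℕ, ContDiffOn ℝ (⊤ : ℕ∞) (coef h m j) (Ioi 0) := by
  intro m
  induction m with
  | zero =>
    intro j
    match j with
    | 0 => exact contDiffOn_const
    | (k+1) => exact contDiffOn_const
  | succ m ih =>
    intro j
    match j with
    | 0 => exact (ih 0).deriv_of_isOpen isOpen_Ioi (by simp)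
    | (k+1) =>
      exact ((ih (k+1)).deriv_of_isOpen isOpen_Ioi (by simp)).add
        ((hh.deriv_of_isOpen isOpen_Ioi (by simp)).mul (ih k))

lemma coef_one {h : ℝ → ℝ} (hh : ContDiffOn ℝ (⊤ : ℕ∞) h (Ioi 0)) :
    ∀ m : ℕ, ∀ x ∈ Ioi (0:ℝ), coef h (m+1) 1 x = iteratedDeriv (m+1) h x := by
  intro m
  induction m with
  | zero =>
    intro x hx
    show deriv (coef h 0 1) x + deriv h x * coef h 0 0 x = _
    show deriv (fun _ => (0:ℝ)) x + deriv h x * (1:ℝ) = _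
    simp [iteratedDeriv_one]
  | succ m ih =>
    intro x hx
    show deriv (coef h (m+1) 1) x + deriv h x * coef h (m+1) 0 x = _
    rw [coef_zero_eq_zero]
    have heq : coef h (m+1) 1 =ᶠ[nhds x] iteratedDeriv (m+1) h :=
      eventually_of_mem (isOpen_Ioi.mem_nhds hx) fun y hy => ih y hy
    rw [heq.deriv_eq, ← iteratedDeriv_succ]
    simp

lemma exp_expansion {h : ℝ → ℝ} (hh : ContDiffOn ℝ (⊤ : ℕ∞) h (Ioi 0)) (t : ℝ) :
    ∀ m : ℕ, ∀ x ∈ Ioi (0:ℝ),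
    iteratedDeriv m (fun y => Real.exp (t * h y)) x
      = (∑ j ∈ Finset.range (m+1), t^j * coef h m j x) * Real.exp (t * h x) := by
  intro m
  induction m with
  | zero =>
    intro x hx
    have : coef h 0 0 x = 1 := rfl
    simp [iteratedDeriv_zero, this]
  | succ m ih =>
    intro x hx
    have heq : (fun y => (∑ j ∈ Finset.range (m+1), t^j * coef h m j y) * Real.exp (t * h y))
        =ᶠ[nhds x] iteratedDeriv m (fun y => Real.exp (t * h y)) :=
      eventually_of_mem (isOpen_Ioi.mem_nhds hx) fun y hy => (ih y hy).symm
    rw [iteratedDeriv_succ, ← heq.deriv_eq]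
    have Hsum : HasDerivAt (fun y => ∑ j ∈ Finset.range (m+1), t^j * coef h m j y)
        (∑ j ∈ Finset.range (m+1), t^j * deriv (coef h m j) x) x :=
      HasDerivAt.fun_sum fun j _ =>
        ((diffAt (coef_smooth hh m j) hx).hasDerivAt.const_mul _)
    have Hexp : HasDerivAt (fun y => Real.exp (t * h y))
        (Real.exp (t * h x) * (t * deriv h x)) x :=
      (((diffAt hh hx).hasDerivAt.const_mul t)).exp
    rw [(Hsum.fun_mul Hexp).deriv]
    have hRHS : ∑ j ∈ Finset.range (m+2), t^j * coef h (m+1) j x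
        = (∑ j ∈ Finset.range (m+1), t^j * deriv (coef h m j) x)
          + t * deriv h x * ∑ j ∈ Finset.range (m+1), t^j * coef h m j x := by
      rw [Finset.sum_range_succ' (fun j => t^j * coef h (m+1) j x) (m+1)]
      have hcs : ∀ j ∈ Finset.range (m+1), t^(j+1) * coef h (m+1) (j+1) x
          = t^(j+1) * deriv (coef h m (j+1)) x + t * deriv h x * (t^j * coef h m j x) := by
        intro j _
        have : coef h (m+1) (j+1) x
            = deriv (coef h m (j+1)) x + deriv h x * coef h m j x := rfl
        rw [this]; ring
      rw [Finset.sum_congr rfl hcs, Finset.sum_add_distrib, ← Finset.mul_sum]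
      have hc0 : coef h (m+1) 0 x = deriv (coef h m 0) x := rfl
      have e2 : (∑ j ∈ Finset.range (m+2), t^j * deriv (coef h m j) x)
          = ∑ j ∈ Finset.range (m+1), t^(j+1) * deriv (coef h m (j+1)) x
            + t^0 * deriv (coef h m 0) x :=
        Finset.sum_range_succ' _ (m+1)
      have e3 : (∑ j ∈ Finset.range (m+2), t^j * deriv (coef h m j) x)
          = ∑ j ∈ Finset.range (m+1), t^j * deriv (coef h m j) x := by
        rw [Finset.sum_range_succ]
        have : coef h m (m+1) = fun _ => 0 := coef_eq_zero_of_lt h m (m+1) (by omega)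
        rw [this]
        simp
      rw [hc0]
      rw [e3] at e2
      linarith [e2]
    rw [hRHS]
    ring

lemma coef_limit (h : ℝ → ℝ) (k : ℕ) (x : ℝ) :
    Tendsto (fun n : ℕ => (n:ℝ) * ∑ j ∈ Finset.range (k+2), ((1:ℝ)/n)^j * coef h (k+1) j x)
      atTop (𝓝 (coef h (k+1) 1 x)) := by
  have hev : (fun n : ℕ => (n:ℝ) * ∑ j ∈ Finset.range (k+2), ((1:ℝ)/n)^j * coef h (k+1) j x)
      =ᶠ[atTop] (fun n : ℕ =>
        coef h (k+1) 1 x + ∑ j ∈ Finset.range k, ((1:ℝ)/n)^(j+1) * coef h (k+1) (j+2) x) := by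
    filter_upwards [eventually_ge_atTop 1] with n hn
    have hn0 : (n:ℝ) ≠ 0 := by
      have : (0:ℝ) < n := by exact_mod_cast Nat.lt_of_lt_of_le Nat.zero_lt_one hn
      exact this.ne'
    have h1 : (n:ℝ) * (1/n) = 1 := mul_one_div_cancel hn0
    have hc0 : coef h (k+1) 0 x = 0 := by rw [coef_zero_eq_zero]
    rw [Finset.sum_range_succ' (fun j => ((1:ℝ)/n)^j * coef h (k+1) j x) (k+1)]
    rw [Finset.sum_range_succ' (fun j => ((1:ℝ)/n)^(j+1) * coef h (k+1) (j+1) x) k]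
    rw [hc0]
    rw [mul_add, mul_add, Finset.mul_sum]
    have hterm : ∀ j ∈ Finset.range k, (n:ℝ) * (((1:ℝ)/n)^(j+1+1) * coef h (k+1) (j+1+1) x)
        = ((1:ℝ)/n)^(j+1) * coef h (k+1) (j+2) x := by
      intro j _
      rw [pow_succ]
      linear_combination (((1:ℝ)/n)^(j+1) * coef h (k+1) (j+2) x) * h1
    rw [Finset.sum_congr rfl hterm]
    have h2 : (n:ℝ) * (((1:ℝ)/n)^(0+1) * coef h (k+1) (0+1) x) = coef h (k+1) 1 x := by
      rw [pow_one]
      linear_combination (coef h (k+1) 1 x) * h1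
    rw [h2]
    simp [add_comm]
  rw [tendsto_congr' hev]
  have hz : Tendsto (fun n : ℕ => ∑ j ∈ Finset.range k, ((1:ℝ)/n)^(j+1) * coef h (k+1) (j+2) x)
      atTop (𝓝 0) := by
    have := tendsto_finset_sum (Finset.range k)
      (fun j _ => ((tendsto_one_div_atTop_nhds_zero_nat.pow (j+1)).mul_const
        (coef h (k+1) (j+2) x)))
    simpa using this
  simpa using tendsto_const_nhds.add hz

end Horn

open Horn

/-- A function `u : ℝ → ℝ` is completely monotonic on `(0,∞)` if it is infinitely
differentiable there and `(-1)^n u^{(n)}(x) ≥ 0` for all `x > 0` and all `n ≥ 0`. -/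
def CompletelyMonotonicOn (u : ℝ → ℝ) : Prop :=
  ContDiffOn ℝ (⊤ : ℕ∞) u (Set.Ioi 0) ∧
  ∀ (n : ℕ), ∀ x ∈ Set.Ioi (0 : ℝ), 0 ≤ (-1 : ℝ) ^ n * iteratedDerivWithin n u (Set.Ioi 0) x

/-- Horn's theorem: for a smooth positive function `f` on `(0,∞)` the following are
equivalent: (i) `-f'/f` is completely monotonic; (ii) `f^c` is completely monotonic for
every `c > 0`; (iii) `f^{1/n}` is completely monotonic for every positive integer `n`. -/
theorem horn_characterization (f : ℝ → ℝ)
    (hf : ContDiffOn ℝ (⊤ : ℕ∞) f (Set.Ioi 0))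
    (hfpos : ∀ x ∈ Set.Ioi (0 : ℝ), 0 < f x) :
    [CompletelyMonotonicOn (fun x => -(derivWithin f (Set.Ioi 0) x / f x)),
     ∀ c : ℝ, 0 < c → CompletelyMonotonicOn (fun x => f x ^ c),
     ∀ n : ℕ, 0 < n → CompletelyMonotonicOn (fun x => f x ^ ((1 : ℝ) / n))].TFAE := by
  have hUD : UniqueDiffOn ℝ (Ioi (0:ℝ)) := isOpen_Ioi.uniqueDiffOn
  have hne : ∀ x ∈ Ioi (0:ℝ), f x ≠ 0 := fun x hx => (hfpos x hx).ne'
  have hh : ContDiffOn ℝ (⊤ : ℕ∞) (fun x => Real.log (f x)) (Ioi 0) := hf.log hne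
  have hg1 : ContDiffOn ℝ (⊤ : ℕ∞) (fun x => -(deriv f x / f x)) (Ioi 0) :=
    ((hf.deriv_of_isOpen isOpen_Ioi (by simp)).div hf hne).neg
  have hEqOn0 : Set.EqOn (fun x => -(derivWithin f (Set.Ioi 0) x / f x))
      (fun x => -(deriv f x / f x)) (Ioi 0) := fun x hx => by
    simp only [derivWithin_of_isOpen isOpen_Ioi hx]
  have hderiv_log : ∀ x ∈ Ioi (0:ℝ), deriv (fun y => Real.log (f y)) x = deriv f x / f x := by
    intro x hx
    have hd : HasDerivAt f (deriv f x) x := (diffAt hf hx).hasDerivAt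
    have h2 : HasDerivAt (fun y => Real.log (f y)) ((f x)⁻¹ * deriv f x) x :=
      (Real.hasDerivAt_log (hne x hx)).comp x hd
    rw [h2.deriv, inv_mul_eq_div]
  tfae_have 1 → 2 := by
    rintro ⟨hsm, hsgn⟩ c hc
    have hgs : ∀ k : ℕ, ∀ x ∈ Ioi (0:ℝ),
        0 ≤ (-1:ℝ)^k * iteratedDeriv k (fun y => -(deriv f y / f y)) x := by
      intro k x hx
      have := hsgn k x hx
      rwa [iteratedDerivWithin_congr hEqOn0 hx, iter_eq _ k hx] at this
    set g : ℝ → ℝ := fun y => c * -(deriv f y / f y) with hgdef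
    set u : ℝ → ℝ := fun y => Real.exp (c * Real.log (f y)) with hudef
    have husm : ContDiffOn ℝ (⊤ : ℕ∞) u (Ioi 0) :=
      Real.contDiff_exp.comp_contDiffOn (contDiffOn_const.mul hh)
    have hud : ∀ x ∈ Ioi (0:ℝ), deriv u x = -(g x * u x) := by
      intro x hx
      have hdl : HasDerivAt (fun y => Real.log (f y))
          (deriv (fun y => Real.log (f y)) x) x := (diffAt hh hx).hasDerivAt
      have He : HasDerivAt u (Real.exp (c * Real.log (f x)) *
          (c * deriv (fun y => Real.log (f y)) x)) x := (hdl.const_mul c).exp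
      rw [He.deriv, hderiv_log x hx, hgdef]
      ring
    have hgsc : ∀ k : ℕ, ∀ x ∈ Ioi (0:ℝ), 0 ≤ (-1:ℝ)^k * iteratedDeriv k g x := by
      intro k x hx
      have hbr : iteratedDeriv k g x = c * iteratedDeriv k (fun y => -(deriv f y / f y)) x := by
        rw [← iter_eq g k hx,
          iteratedDerivWithin_const_mul hx hUD c ((hg1.of_le (by exact_mod_cast le_top)) x hx), iter_eq _ k hx]
      rw [hbr, show (-1:ℝ)^k * (c * iteratedDeriv k (fun y => -(deriv f y / f y)) x)
        = c * ((-1:ℝ)^k * iteratedDeriv k (fun y => -(deriv f y / f y)) x) by ring]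
      exact mul_nonneg hc.le (hgs k x hx)
    have hsign := sign_lemma (contDiffOn_const.mul hg1) hgsc husm
      (fun x _ => Real.exp_pos _) hud
    have heq : Set.EqOn (fun x => f x ^ c) u (Ioi 0) := fun x hx => by
      show f x ^ c = Real.exp (c * Real.log (f x))
      rw [Real.rpow_def_of_pos (hfpos x hx), mul_comm]
    refine ⟨husm.congr heq, fun n x hx => ?_⟩
    rw [iteratedDerivWithin_congr heq hx, iter_eq u n hx]
    exact hsign n x hx
  tfae_have 2 → 3 := by
    intro h2 n hn
    have : (0:ℝ) < 1 / n := by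
      have : (0:ℝ) < n := by exact_mod_cast hn
      positivity
    exact h2 _ this
  tfae_have 3 → 1 := by
    intro h3
    refine ⟨hg1.congr hEqOn0, fun k x hx => ?_⟩
    rw [iteratedDerivWithin_congr hEqOn0 hx, iter_eq _ k hx]
    have hgh : Set.EqOn (fun y => -(deriv f y / f y))
        (fun y => -(deriv (fun z => Real.log (f z)) y)) (Ioi 0) := fun y hy => by
      simp only [hderiv_log y hy]
    rw [eqOn_iter hgh k hx]
    have hneg : iteratedDeriv k (fun y => -(deriv (fun z => Real.log (f z)) y)) x
        = -(iteratedDeriv (k+1) (fun z => Real.log (f z)) x) := by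
      rw [iteratedDeriv_succ', iteratedDeriv_fun_neg]
    rw [hneg]
    have key : 0 ≤ (-1:ℝ)^(k+1) * iteratedDeriv (k+1) (fun z => Real.log (f z)) x := by
      have hsgn : ∀ n : ℕ, 1 ≤ n → 0 ≤ (-1:ℝ)^(k+1) *
          ((n:ℝ) * ∑ j ∈ Finset.range (k+2),
            ((1:ℝ)/n)^j * coef (fun z => Real.log (f z)) (k+1) j x) := by
        intro n hn
        obtain ⟨-, hsgn'⟩ := h3 n hn
        have hthis := hsgn' (k+1) x hx
        have eqOn2 : Set.EqOn (fun y => f y ^ ((1:ℝ)/n))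
            (fun y => Real.exp ((1/n) * Real.log (f y))) (Ioi 0) := fun y hy => by
          show f y ^ ((1:ℝ)/n) = Real.exp ((1:ℝ)/n * Real.log (f y))
          rw [Real.rpow_def_of_pos (hfpos y hy), mul_comm]
        rw [iteratedDerivWithin_congr eqOn2 hx, iter_eq _ (k+1) hx,
          exp_expansion hh ((1:ℝ)/n) (k+1) x hx] at hthis
        have hexp : (0:ℝ) < Real.exp ((1/n) * Real.log (f x)) := Real.exp_pos _
        set A := ∑ j ∈ Finset.range (k+2), ((1:ℝ)/n)^j * coef (fun z => Real.log (f z)) (k+1) j x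
        rw [show (-1:ℝ)^(k+1) * (A * Real.exp (1/↑n * Real.log (f x)))
          = Real.exp (1/↑n * Real.log (f x)) * ((-1:ℝ)^(k+1) * A) by ring] at hthis
        have hA : 0 ≤ (-1:ℝ)^(k+1) * A := nonneg_of_mul_nonneg_right hthis hexp
        have hn0 : (0:ℝ) ≤ n := Nat.cast_nonneg n
        rw [show (-1:ℝ)^(k+1) * ((n:ℝ) * A) = (n:ℝ) * ((-1:ℝ)^(k+1) * A) by ring]
        exact mul_nonneg hn0 hA
      have hlim := (coef_limit (fun z => Real.log (f z)) k x).const_mul ((-1:ℝ)^(k+1))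
      have hge : 0 ≤ (-1:ℝ)^(k+1) * coef (fun z => Real.log (f z)) (k+1) 1 x := by
        refine ge_of_tendsto hlim ?_
        filter_upwards [eventually_ge_atTop 1] with n hn
        exact hsgn n hn
      rwa [coef_one hh k x hx] at hge
    rw [show (-1:ℝ)^k * -(iteratedDeriv (k+1) (fun z => Real.log (f z)) x)
      = (-1:ℝ)^(k+1) * iteratedDeriv (k+1) (fun z => Real.log (f z)) x by rw [pow_succ]; ring]
    exact key
  tfae_finish
end

section
/- For every x > 0, ρ(x) = ∫₀¹ t/(x + t)² dt, where ρ(x) = log(1 + 1/x) − 1/(x+1); in particular ρ is a generalized Stieltjes function of order 2. -/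
/-!
Since `d/dt (log (x + t) + x / (x + t)) = t / (x + t) ^ 2`, the fundamental theorem of calculus
gives `∫₀¹ t / (x + t) ^ 2 dt = log (x + 1) + x / (x + 1) - log x - 1 = ρ(x)`. Hence `ρ` is the
order-2 Stieltjes transform of the measure `t · 𝟙_{(0,1]}(t) dt`, with constant `c = 0`.
-/

/-- A generalized Stieltjes function of order 2 on `(0,∞)`:
`f(x) = c + ∫₀^∞ dμ(t)/(x+t)²` with `c ≥ 0` and `μ` a positive measure on `[0,∞)`. -/
def IsGenStieltjesOrderTwo (f : ℝ → ℝ) : Prop :=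
  ∃ (c : ℝ) (μ : MeasureTheory.Measure ℝ), 0 ≤ c ∧
    ∀ x : ℝ, 0 < x → f x = c + ∫ t in Set.Ici (0 : ℝ), ((x + t) ^ 2)⁻¹ ∂μ

open MeasureTheory Set Real

theorem hasDerivAt_log_add_add_div_add {x t : ℝ} (h : x + t ≠ 0) :
    HasDerivAt (fun s => log (x + s) + x / (x + s)) (t / (x + t) ^ 2) t := by
  have hlin : HasDerivAt (fun s => x + s) 1 t := (hasDerivAt_id t).const_add x
  refine ((hlin.log h).add ((hasDerivAt_const t x).div hlin h)).congr_deriv ?_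
  field_simp
  ring

theorem integral_div_add_sq {x a b : ℝ} (h : ∀ t ∈ uIcc a b, x + t ≠ 0) :
    ∫ t in a..b, t / (x + t) ^ 2 =
      (log (x + b) + x / (x + b)) - (log (x + a) + x / (x + a)) := by
  have hcont : ContinuousOn (fun t => t / (x + t) ^ 2) (uIcc a b) :=
    continuousOn_id.div (by fun_prop) fun t ht => pow_ne_zero 2 (h t ht)
  exact intervalIntegral.integral_eq_sub_of_hasDerivAt
    (fun t ht => hasDerivAt_log_add_add_div_add (h t ht)) hcont.intervalIntegrable

theorem log_one_add_one_div_sub_one_div_eq_integral {x : ℝ} (hx : 0 < x) :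
    log (1 + 1 / x) - 1 / (x + 1) = ∫ t in (0 : ℝ)..1, t / (x + t) ^ 2 := by
  have hne : ∀ t ∈ uIcc (0 : ℝ) 1, x + t ≠ 0 := fun t ht => by
    rw [uIcc_of_le zero_le_one] at ht
    linarith [ht.1]
  rw [integral_div_add_sq hne, add_zero, div_self hx.ne', one_add_div hx.ne',
    log_div (by linarith) hx.ne']
  field_simp
  ring

theorem isGenStieltjesOrderTwo_of_eq_intervalIntegral {f w : ℝ → ℝ} {a b : ℝ} (ha : 0 ≤ a)
    (hab : a ≤ b) (hw : Measurable w) (hw_nonneg : ∀ t ∈ Ioc a b, 0 ≤ w t)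
    (hf : ∀ x, 0 < x → f x = ∫ t in a..b, w t / (x + t) ^ 2) :
    IsGenStieltjesOrderTwo f := by
  refine ⟨0, (volume.restrict (Ioc a b)).withDensity fun t => ENNReal.ofReal (w t), le_rfl,
    fun x hx => ?_⟩
  rw [hf x hx, zero_add, setIntegral_withDensity_eq_setIntegral_toReal_smul' _
      hw.ennreal_ofReal (ae_of_all _ fun _ => ENNReal.ofReal_lt_top),
    Measure.restrict_restrict measurableSet_Ici, inter_eq_self_of_subset_right
      (Ioc_subset_Ioi_self.trans (Ioi_subset_Ici ha)), intervalIntegral.integral_of_le hab]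
  refine setIntegral_congr_fun measurableSet_Ioc fun t ht => ?_
  rw [ENNReal.toReal_ofReal (hw_nonneg t ht), smul_eq_mul, div_eq_mul_inv]

/-- For every `x > 0`, `ρ(x) = log(1+1/x) − 1/(x+1) = ∫₀¹ t/(x+t)² dt`; in particular,
`ρ` is a generalized Stieltjes function of order `2`. -/
theorem rho_genStieltjes_two :
    (∀ x : ℝ, 0 < x →
      Real.log (1 + 1 / x) - 1 / (x + 1) = ∫ t in (0 : ℝ)..1, t / (x + t) ^ 2) ∧
    IsGenStieltjesOrderTwo (fun x => Real.log (1 + 1 / x) - 1 / (x + 1)) :=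
  ⟨fun _ hx => log_one_add_one_div_sub_one_div_eq_integral hx,
    isGenStieltjesOrderTwo_of_eq_intervalIntegral (w := id) le_rfl zero_le_one measurable_id
      (fun _ ht => ht.1.le) fun _ hx => log_one_add_one_div_sub_one_div_eq_integral hx⟩
end

section
/- The function τ₀(t) = ( t[(1−t)log((1−t)/t) − 1]² + π² t (1−t)² )^{−1} is a probability density on (0,1), i.e., τ₀(t) > 0 for 0 < t < 1 and ∫₀¹ τ₀(t) dt = 1. -/
/-- The density `τ₀(t) = ( t[(1−t)log((1−t)/t) − 1]² + π² t (1−t)² )⁻¹` for `0 < t < 1`. -/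
noncomputable def tau0 (t : ℝ) : ℝ :=
  (t * ((1 - t) * Real.log ((1 - t) / t) - 1) ^ 2 + Real.pi ^ 2 * t * (1 - t) ^ 2)⁻¹

/-!
With `φ(t) = log((1-t)/t) - 1/(1-t)` one has `φ'(t) = -1/(t(1-t)²)`, and the denominator
of `τ₀` factors as `t(1-t)²(φ(t)² + π²)`. Hence `τ₀ = -φ'/(φ² + π²)` is the derivative of
`-arctan(φ/π)/π`. As `φ` decreases from `+∞` at `0` to `-∞` at `1`, the integral is
`(π/2 + π/2)/π = 1`.
-/

open Real Set Filter MeasureTheory Topology Function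

theorem intervalIntegrable_deriv_of_nonneg_of_tendsto {f f' : ℝ → ℝ} {a b fa fb : ℝ}
    (hab : a < b) (hderiv : ∀ x ∈ Ioo a b, HasDerivAt f (f' x) x)
    (hf' : ∀ x ∈ Ioo a b, 0 ≤ f' x) (ha : Tendsto f (𝓝[>] a) (𝓝 fa))
    (hb : Tendsto f (𝓝[<] b) (𝓝 fb)) : IntervalIntegrable f' volume a b := by
  set F := update (update f a fa) b fb
  have hF : EqOn F f (Ioo a b) := fun x hx => by
    simp only [F, update_of_ne hx.2.ne, update_of_ne hx.1.ne']
  have hcont : ContinuousOn F (Icc a b) := by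
    rw [continuousOn_update_iff, continuousOn_update_iff, Icc_sdiff_right, Ico_sdiff_left]
    refine ⟨⟨fun z hz => (hderiv z hz).continuousAt.continuousWithinAt, ?_⟩, ?_⟩
    · exact fun _ => ha.mono_left (nhdsWithin_mono _ Ioo_subset_Ioi_self)
    · rintro -
      refine (hb.congr' ?_).mono_left (nhdsWithin_mono _ Ico_subset_Iio_self)
      filter_upwards [Ioo_mem_nhdsLT hab] with _ hz using (update_of_ne hz.1.ne' _ _).symm
  refine (intervalIntegrable_iff_integrableOn_Ioc_of_le hab.le).2 <|
    intervalIntegral.integrableOn_deriv_of_nonneg hcont (fun x hx => ?_) hf'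
  exact (hderiv x hx).congr_of_eventuallyEq <|
    eventuallyEq_of_mem (Ioo_mem_nhds hx.1 hx.2) hF

theorem integral_neg_deriv_div_sq_add_sq {φ φ' : ℝ → ℝ} {a b c : ℝ} (hab : a < b)
    (hc : 0 < c) (hφ : ∀ x ∈ Ioo a b, HasDerivAt φ (φ' x) x) (hφ' : ∀ x ∈ Ioo a b, φ' x ≤ 0)
    (ha : Tendsto φ (𝓝[>] a) atTop) (hb : Tendsto φ (𝓝[<] b) atBot) :
    ∫ x in a..b, -φ' x / (φ x ^ 2 + c ^ 2) = π / c := by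
  set F : ℝ → ℝ := fun x => -arctan (φ x / c) / c
  have hF : ∀ x ∈ Ioo a b, HasDerivAt F (-φ' x / (φ x ^ 2 + c ^ 2)) x := fun x hx => by
    refine (((hφ x hx).div_const c).arctan.neg.div_const c).congr_deriv ?_
    field_simp
    ring
  have hFa : Tendsto F (𝓝[>] a) (𝓝 (-(π / 2) / c)) :=
    ((tendsto_arctan_atTop.mono_right nhdsWithin_le_nhds).comp
      (ha.atTop_div_const hc)).neg.div_const c
  have hFb : Tendsto F (𝓝[<] b) (𝓝 (-(-(π / 2)) / c)) :=
    ((tendsto_arctan_atBot.mono_right nhdsWithin_le_nhds).comp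
      (hb.atBot_div_const hc)).neg.div_const c
  have hint := intervalIntegrable_deriv_of_nonneg_of_tendsto hab hF
    (fun x hx => div_nonneg (neg_nonneg.2 (hφ' x hx)) (by positivity)) hFa hFb
  rw [intervalIntegral.integral_eq_sub_of_hasDerivAt_of_tendsto hab hF hint hFa hFb]
  ring

noncomputable def tau0Phi (t : ℝ) : ℝ := log ((1 - t) / t) - 1 / (1 - t)

theorem hasDerivAt_tau0Phi {t : ℝ} (ht : t ∈ Ioo 0 1) :
    HasDerivAt tau0Phi (-(t * (1 - t) ^ 2)⁻¹) t := by
  obtain ⟨ht0, ht1⟩ := ht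
  have h1t : 1 - t ≠ 0 := by linarith
  have hsub : HasDerivAt (fun s : ℝ => 1 - s) (-1) t := by
    simpa using (hasDerivAt_id t).const_sub 1
  refine (((hsub.div (hasDerivAt_id' t) ht0.ne').log (div_ne_zero h1t ht0.ne')).sub
    ((hasDerivAt_const t (1 : ℝ)).div hsub h1t)).congr_deriv ?_
  simp only [Pi.div_apply]
  field_simp
  ring

theorem tau0_eq {t : ℝ} (ht : t ∈ Ioo 0 1) :
    tau0 t = (t * (1 - t) ^ 2)⁻¹ / (tau0Phi t ^ 2 + π ^ 2) := by
  obtain ⟨ht0, ht1⟩ := ht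
  have h1t : 1 - t ≠ 0 := by linarith
  have hden : t * ((1 - t) * log ((1 - t) / t) - 1) ^ 2 + π ^ 2 * t * (1 - t) ^ 2 =
      t * (1 - t) ^ 2 * (tau0Phi t ^ 2 + π ^ 2) := by
    rw [tau0Phi]
    field_simp
  rw [tau0, hden, mul_inv, div_eq_mul_inv]

theorem tendsto_tau0Phi_nhdsGT_zero : Tendsto tau0Phi (𝓝[>] 0) atTop := by
  have hlog : Tendsto (fun t : ℝ => log ((1 - t) / t)) (𝓝[>] 0) atTop := by
    refine tendsto_log_atTop.comp
      ((tendsto_atTop_add_const_right _ (-1) tendsto_inv_nhdsGT_zero).congr' ?_)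
    filter_upwards [self_mem_nhdsWithin] with t (ht : 0 < t)
    field_simp
    ring
  have hrest : Tendsto (fun t : ℝ => 1 / (1 - t)) (𝓝[>] 0) (𝓝 (1 / (1 - 0))) :=
    (continuousAt_const.div (continuousAt_const.sub continuousAt_id) (by norm_num)).tendsto
      |>.mono_left nhdsWithin_le_nhds
  exact hlog.atTop_add hrest.neg

theorem tendsto_tau0Phi_nhdsLT_one : Tendsto tau0Phi (𝓝[<] 1) atBot := by
  have hsub : Tendsto (fun t : ℝ => 1 - t) (𝓝[<] 1) (𝓝[>] 0) := by
    refine tendsto_nhdsWithin_iff.2 ⟨?_, ?_⟩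
    · exact ((by fun_prop : Continuous fun t : ℝ => 1 - t).tendsto' 1 0 (sub_self 1)).mono_left
        nhdsWithin_le_nhds
    · filter_upwards [self_mem_nhdsWithin] with t (ht : t < 1)
      exact sub_pos.2 ht
  have hratio : Tendsto (fun t : ℝ => (1 - t) / t) (𝓝[<] 1) (𝓝[>] 0) := by
    refine tendsto_nhdsWithin_iff.2 ⟨?_, ?_⟩
    · rw [← zero_div (1 : ℝ)]
      exact (hsub.mono_right nhdsWithin_le_nhds).div (tendsto_id.mono_left nhdsWithin_le_nhds)
        one_ne_zero
    · filter_upwards [Ioo_mem_nhdsLT zero_lt_one] with t ht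
      exact div_pos (sub_pos.2 ht.2) ht.1
  refine (tendsto_log_nhdsGT_zero.comp hratio).atBot_add_atBot ?_
  simp only [one_div]
  exact tendsto_neg_atTop_atBot.comp (tendsto_inv_nhdsGT_zero.comp hsub)

/-- `τ₀` is a probability density on `(0,1)`: it is positive there and integrates to `1`. -/
theorem tau0_probability_density :
    (∀ t ∈ Set.Ioo (0 : ℝ) 1, 0 < tau0 t) ∧ (∫ t in (0 : ℝ)..1, tau0 t) = 1 := by
  have hweight : ∀ t ∈ Ioo (0 : ℝ) 1, 0 < (t * (1 - t) ^ 2)⁻¹ := fun t ht =>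
    inv_pos.2 (mul_pos ht.1 (pow_pos (sub_pos.2 ht.2) 2))
  refine ⟨fun t ht => ?_, ?_⟩
  · rw [tau0_eq ht]
    exact div_pos (hweight t ht) (by positivity)
  · rw [intervalIntegral.integral_congr_Ioo_of_le
        (g := fun t => -(-(t * (1 - t) ^ 2)⁻¹) / (tau0Phi t ^ 2 + π ^ 2)) zero_le_one
        (fun t ht => by simp only [tau0_eq ht, neg_neg]),
      integral_neg_deriv_div_sq_add_sq zero_lt_one pi_pos (fun t ht => hasDerivAt_tau0Phi ht)
        (fun t ht => neg_nonpos.2 (hweight t ht).le)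
        tendsto_tau0Phi_nhdsGT_zero tendsto_tau0Phi_nhdsLT_one,
      div_self pi_ne_zero]
end

section
/- For every x > 0, (x+1)·[(x+1)log(1 + 1/x) − 1] = 1/2 + ∫₀¹ (1 − t)²/(x + t) dt. Equivalently, 1/(x·g(x)) = 1/2 + ∫₀¹ (1 − t)²/(x + t) dt, where g(x) = 1/( x(x+1)[(x+1)log(1 + 1/x) − 1] ). -/
/-!
Writing `1 - t = (x + 1) - (x + t)` splits the integrand into
`(x + 1)² / (x + t) - 2 (x + 1) + (x + t)`, whose primitive
`(x + 1)² log (x + t) - 2 (x + 1) t + (x + t)² / 2` evaluates between `0` and `1` to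
`(x + 1)² log (1 + 1/x) - x - 3/2`, which is the left-hand side minus `1/2`.
-/

open Real intervalIntegral

/-- `g(x) = 1/( x(x+1)[(x+1)log(1 + 1/x) − 1] )`. -/
noncomputable def gfun (x : ℝ) : ℝ :=
  1 / (x * (x + 1) * ((x + 1) * Real.log (1 + 1 / x) - 1))

lemma hasDerivAt_primitive_one_sub_sq_div_add {x t : ℝ} (hxt : x + t ≠ 0) :
    HasDerivAt (fun s => (x + 1) ^ 2 * log (x + s) - 2 * (x + 1) * s + (x + s) ^ 2 / 2)
      ((1 - t) ^ 2 / (x + t)) t := by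
  have hlog : HasDerivAt (fun s => log (x + s)) (1 / (x + t)) t := by
    simpa [Function.comp_def] using
      (hasDerivAt_log hxt).comp t ((hasDerivAt_id t).const_add x)
  have hsq : HasDerivAt (fun s => (x + s) ^ 2 / 2) (x + t) t := by
    simpa using (((hasDerivAt_id t).const_add x).pow 2).div_const 2
  refine (((hlog.const_mul ((x + 1) ^ 2)).sub
    ((hasDerivAt_id t).const_mul (2 * (x + 1)))).add hsq).congr_deriv ?_
  field_simp
  ring

lemma integral_one_sub_sq_div_add {x : ℝ} (hx : 0 < x) :
    ∫ t in (0 : ℝ)..1, (1 - t) ^ 2 / (x + t) = (x + 1) ^ 2 * log (1 + 1 / x) - x - 3 / 2 := by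
  have hne : ∀ t ∈ Set.uIcc (0 : ℝ) 1, x + t ≠ 0 := fun t ht => by
    rw [Set.uIcc_of_le zero_le_one] at ht
    linarith [ht.1]
  have hintegrable :
      IntervalIntegrable (fun t => (1 - t) ^ 2 / (x + t)) MeasureTheory.volume 0 1 :=
    (ContinuousOn.div (by fun_prop) (by fun_prop) hne).intervalIntegrable
  rw [integral_eq_sub_of_hasDerivAt
    (fun t ht => hasDerivAt_primitive_one_sub_sq_div_add (hne t ht)) hintegrable]
  have hlog : log (1 + 1 / x) = log (x + 1) - log x := by
    rw [← log_div (by positivity) hx.ne']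
    congr 1
    field_simp
  rw [hlog, add_zero]
  ring

lemma one_div_mul_one_div_mul {K : Type*} [Field K] {x y : K} (hx : x ≠ 0) :
    1 / (x * (1 / (x * y))) = y := by
  rcases eq_or_ne y 0 with rfl | hy
  · simp
  · field_simp

/-- For every `x > 0`, `(x+1)·[(x+1)log(1+1/x) − 1] = 1/2 + ∫₀¹ (1−t)²/(x+t) dt`;
equivalently, `1/(x·g(x))` equals the same right-hand side. -/
theorem one_over_x_g_stieltjes (x : ℝ) (hx : 0 < x) :
    ((x + 1) * ((x + 1) * Real.log (1 + 1 / x) - 1) =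
      1 / 2 + ∫ t in (0 : ℝ)..1, (1 - t) ^ 2 / (x + t)) ∧
    (1 / (x * gfun x) = 1 / 2 + ∫ t in (0 : ℝ)..1, (1 - t) ^ 2 / (x + t)) := by
  have key : (x + 1) * ((x + 1) * log (1 + 1 / x) - 1) =
      1 / 2 + ∫ t in (0 : ℝ)..1, (1 - t) ^ 2 / (x + t) := by
    rw [integral_one_sub_sq_div_add hx]
    ring
  refine ⟨key, ?_⟩
  rw [gfun, mul_assoc x, one_div_mul_one_div_mul hx.ne', key]
end

section
/- Let G(z) = 1/( z(z+1)[(z+1)·Log(1 + 1/z) − 1] ), where Log is the principal branch of the complex logarithm; G is holomorphic on ℂ ∖ [−1, 0]. For every t with 0 < t < 1, lim_{y→0⁺} Im G(−t + iy) = −π · τ₀(t), where τ₀(t) = ( t[(1−t)log((1−t)/t) − 1]² + π² t (1−t)² )^{−1}. -/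
/-!
On `ℂ ∖ [-1, 0]` the bracket `(z + 1) Log (1 + 1/z) - 1` equals `∫₀¹ (1 - s) / (z + s) ds`
(integrate `d/ds Log (1 + s/z) = 1/(z + s)`). Off the real axis the imaginary part of this
integral has the sign of `-Im z`, and on the real axis outside `[-1, 0]` the integrand is real of
the sign of `z`; so the bracket never vanishes and `G` is holomorphic there.
As `z → -t` from the upper half-plane, `1 + 1/z → -(1 - t)/t` from the lower half-plane, hence
`Log (1 + 1/z) → log ((1 - t)/t) - iπ`, and `G(z)` tends to the reciprocal of
`-t (1 - t) ((1 - t)(log ((1 - t)/t) - iπ) - 1)`, whose imaginary part is `-π τ₀(t)`.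
-/

/-- `G(z) = 1/( z(z+1)[(z+1)·Log(1 + 1/z) − 1] )` with the principal logarithm. -/
noncomputable def Gc (z : ℂ) : ℂ :=
  (z * (z + 1) * ((z + 1) * Complex.log (1 + 1 / z) - 1))⁻¹

open Complex Real Topology Filter Set intervalIntegral

noncomputable def logBracket (z : ℂ) : ℂ :=
  (z + 1) * log (1 + 1 / z) - 1

section Segment

variable {z : ℂ}

lemma add_ofReal_ne_zero_of_notMem_segment (hz : z ∉ ofReal '' Icc (-1) 0) {s : ℝ}
    (hs : s ∈ Icc (0 : ℝ) 1) : z + s ≠ 0 := fun h =>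
  hz ⟨-s, ⟨by linarith [hs.2], by linarith [hs.1]⟩, by push_cast; linear_combination -h⟩

lemma ne_zero_of_notMem_segment (hz : z ∉ ofReal '' Icc (-1) 0) : z ≠ 0 := by
  simpa using add_ofReal_ne_zero_of_notMem_segment hz (s := 0) (by norm_num)

lemma add_one_ne_zero_of_notMem_segment (hz : z ∉ ofReal '' Icc (-1) 0) : z + 1 ≠ 0 := by
  simpa using add_ofReal_ne_zero_of_notMem_segment hz (s := 1) (by norm_num)

lemma one_add_one_div_mem_slitPlane (hz : z ∉ ofReal '' Icc (-1) 0) :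
    1 + 1 / z ∈ slitPlane := by
  have hz0 := ne_zero_of_notMem_segment hz
  by_contra h
  obtain ⟨hre, him⟩ : (1 + 1 / z).re ≤ 0 ∧ (1 + 1 / z).im = 0 := by
    rw [mem_slitPlane_iff, not_or, not_lt, not_not] at h; exact h
  set r := (1 + 1 / z).re
  have hw : 1 + 1 / z = r := Complex.ext (by simp [r]) (by simpa using him)
  have hr : r - 1 ≤ -1 := by linarith
  refine hz ⟨(r - 1)⁻¹, ⟨?_, (inv_lt_zero.2 (by linarith)).le⟩, ?_⟩
  · rw [le_inv_of_neg (by norm_num) (by linarith)]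
    linarith
  · have hr1 : (r : ℂ) - 1 ≠ 0 := by
      rw [← hw]; simpa using hz0
    push_cast
    rw [← hw]
    field_simp
    ring

lemma logBracket_eq_integral (hz : z ∉ ofReal '' Icc (-1) 0) :
    logBracket z = ∫ s in (0 : ℝ)..1, (1 - s) / (z + s) := by
  have hz0 := ne_zero_of_notMem_segment hz
  have hw := one_add_one_div_mem_slitPlane hz
  have hint : IntervalIntegrable (fun s : ℝ => (1 + s • (1 / z))⁻¹) MeasureTheory.volume 0 1 :=
    (continuousOn_one_add_mul_inv hw).intervalIntegrable_of_Icc zero_le_one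
  rw [logBracket, log_eq_integral hw, ← mul_assoc, ← integral_const_mul]
  calc _ = ∫ s in (0 : ℝ)..1, ((z + 1) * (1 / z) * (1 + s • (1 / z))⁻¹ - 1) := by
        rw [integral_sub (hint.const_mul _) intervalIntegrable_const]; simp
    _ = _ := integral_congr fun s hs => ?_
  have hs' : s ∈ Icc (0 : ℝ) 1 := by simpa using hs
  have hzs := add_ofReal_ne_zero_of_notMem_segment hz hs'
  have h1 : 1 + s • (1 / z) = (z + s) / z := by rw [real_smul]; field_simp
  rw [h1]
  field_simp
  ring

lemma integral_one_sub_div_add_ne_zero_of_im_ne_zero (hz : z.im ≠ 0) :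
    ∫ s in (0 : ℝ)..1, (1 - s) / (z + s) ≠ 0 := by
  have hne (s : ℝ) : z + s ≠ 0 := fun h => hz (by simpa using congrArg im h)
  have hint : IntervalIntegrable (fun s : ℝ => (1 - s : ℂ) / (z + s)) MeasureTheory.volume 0 1 :=
    (Continuous.div (by fun_prop) (by fun_prop) hne).intervalIntegrable _ _
  have him : (∫ s in (0 : ℝ)..1, (1 - s) / (z + s)).im
      = -z.im * ∫ s in (0 : ℝ)..1, (1 - s) / normSq (z + s) := by
    rw [← imCLM_apply, ← imCLM.intervalIntegral_comp_comm hint, ← integral_const_mul]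
    refine integral_congr fun s _ => ?_
    simp only [imCLM_apply, div_im, sub_im, one_im, ofReal_im, add_im, sub_re, one_re, ofReal_re]
    ring
  have hpos : 0 < ∫ s in (0 : ℝ)..1, (1 - s) / normSq (z + s) := by
    refine intervalIntegral_pos_of_pos_on ?_ (fun s hs => ?_) zero_lt_one
    · exact (Continuous.div (by fun_prop) (by fun_prop)
        fun s => (normSq_pos.2 (hne s)).ne').intervalIntegrable _ _
    · exact div_pos (by linarith [hs.2]) (normSq_pos.2 (hne s))
  intro h
  rw [h, zero_im] at him
  exact mul_ne_zero (neg_ne_zero.2 hz) hpos.ne' him.symm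

lemma integral_one_sub_div_add_ofReal_ne_zero {x : ℝ} (hx : x ∉ Icc (-1) 0) :
    ∫ s in (0 : ℝ)..1, (1 - s) / ((x : ℂ) + s) ≠ 0 := by
  have hsign {s : ℝ} (hs : s ∈ Icc (0 : ℝ) 1) : 0 < x / (x + s) := by
    rcases lt_or_gt_of_ne (show x ≠ 0 by rintro rfl; simp at hx) with h | h
    · have hx1 : x < -1 := by by_contra h'; exact hx ⟨by linarith, h.le⟩
      exact div_pos_of_neg_of_neg h (by linarith [hs.2])
    · exact div_pos h (by linarith [hs.1])
  have hpos : 0 < ∫ s in (0 : ℝ)..1, x * ((1 - s) / (x + s)) := by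
    refine intervalIntegral_pos_of_pos_on ?_ (fun s hs => ?_) zero_lt_one
    · refine ContinuousOn.intervalIntegrable_of_Icc zero_le_one ?_
      exact ContinuousOn.mul continuousOn_const (ContinuousOn.div (by fun_prop) (by fun_prop)
        fun s hs h => (hsign hs).ne' (by simp [h]))
    · rw [mul_div_left_comm]
      exact mul_pos (by linarith [hs.2]) (hsign (Ioo_subset_Icc_self hs))
  rw [integral_const_mul] at hpos
  have hcast : ∫ s in (0 : ℝ)..1, (1 - s) / ((x : ℂ) + s)
      = ((∫ s in (0 : ℝ)..1, (1 - s) / (x + s) : ℝ) : ℂ) := by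
    rw [← integral_ofReal]; push_cast; rfl
  rw [hcast, ofReal_ne_zero]
  exact right_ne_zero_of_mul hpos.ne'

lemma logBracket_ne_zero (hz : z ∉ ofReal '' Icc (-1) 0) : logBracket z ≠ 0 := by
  rw [logBracket_eq_integral hz]
  rcases ne_or_eq z.im 0 with him | him
  · exact integral_one_sub_div_add_ne_zero_of_im_ne_zero him
  · rw [← re_add_im z, him, ofReal_zero, zero_mul, add_zero] at hz ⊢
    exact integral_one_sub_div_add_ofReal_ne_zero fun h => hz (mem_image_of_mem _ h)

end Segment

lemma differentiableOn_Gc : DifferentiableOn ℂ Gc (ofReal '' Icc (-1 : ℝ) 0)ᶜ := by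
  intro z hz
  have hz0 := ne_zero_of_notMem_segment hz
  have hlog : DifferentiableAt ℂ (fun w => Complex.log (1 + 1 / w)) z :=
    (by fun_prop (disch := exact hz0) : DifferentiableAt ℂ (fun w => 1 + 1 / w) z).clog
      (one_add_one_div_mem_slitPlane hz)
  refine (DifferentiableAt.inv (by fun_prop) ?_).differentiableWithinAt
  exact mul_ne_zero (mul_ne_zero hz0 (add_one_ne_zero_of_notMem_segment hz)) (logBracket_ne_zero hz)

lemma tendsto_ofReal_add_mul_I (x : ℝ) :
    Tendsto (fun y : ℝ => (x : ℂ) + y * I) (𝓝[>] 0) (𝓝[{z : ℂ | 0 < z.im}] x) := by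
  refine tendsto_nhdsWithin_iff.2 ⟨?_, ?_⟩
  · have : Continuous fun y : ℝ => (x : ℂ) + y * I := by fun_prop
    simpa using (this.tendsto 0).mono_left nhdsWithin_le_nhds
  · filter_upwards [self_mem_nhdsWithin] with y hy
    simpa using hy

lemma tendsto_one_add_one_div_nhdsWithin_upper {x : ℝ} (hx : x ≠ 0) :
    Tendsto (fun z : ℂ => 1 + 1 / z) (𝓝[{z | 0 < z.im}] x)
      (𝓝[{z | z.im < 0}] ((1 + 1 / x : ℝ) : ℂ)) := by
  refine tendsto_nhdsWithin_iff.2 ⟨?_, ?_⟩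
  · have : ContinuousAt (fun z : ℂ => 1 + 1 / z) x := by
      fun_prop (disch := exact_mod_cast hx)
    simpa using this.tendsto.mono_left nhdsWithin_le_nhds
  · filter_upwards [self_mem_nhdsWithin] with z (hz : 0 < z.im)
    have hz0 : z ≠ 0 := fun h => by simp [h] at hz
    simp only [add_im, one_im, one_div, inv_im, zero_add]
    exact div_neg_of_neg_of_pos (neg_neg_of_pos hz) (normSq_pos.2 hz0)

section Boundary

variable {t : ℝ}

lemma tendsto_log_one_add_one_div (ht : t ∈ Ioo 0 1) :
    Tendsto (fun z : ℂ => log (1 + 1 / z)) (𝓝[{z | 0 < z.im}] ((-t : ℝ) : ℂ))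
      (𝓝 (Real.log ((1 - t) / t) - π * I)) := by
  have hneg : 1 + 1 / -t < 0 := by
    rw [div_neg, ← sub_eq_add_neg, sub_neg, one_lt_div ht.1]; exact ht.2
  have hnorm : ‖((1 + 1 / -t : ℝ) : ℂ)‖ = (1 - t) / t := by
    rw [norm_real, Real.norm_eq_abs, abs_of_neg hneg]
    field_simp [ht.1.ne']
    ring
  have h := tendsto_log_nhdsWithin_im_neg_of_re_neg_of_im_zero
    (by rwa [ofReal_re]) (ofReal_im (1 + 1 / -t))
  rw [hnorm] at h
  exact h.comp (tendsto_one_add_one_div_nhdsWithin_upper (neg_ne_zero.2 ht.1.ne'))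

lemma tendsto_logBracket_nhdsWithin_upper (ht : t ∈ Ioo 0 1) :
    Tendsto logBracket (𝓝[{z | 0 < z.im}] ((-t : ℝ) : ℂ))
      (𝓝 ((1 - t) * (Real.log ((1 - t) / t) - π * I) - 1)) := by
  have hz : Tendsto (fun z : ℂ => z) (𝓝[{z | 0 < z.im}] ((-t : ℝ) : ℂ)) (𝓝 (-t : ℝ)) :=
    tendsto_id.mono_left nhdsWithin_le_nhds
  show Tendsto (fun z => (z + 1) * Complex.log (1 + 1 / z) - 1) _ _
  convert ((hz.add_const 1).mul (tendsto_log_one_add_one_div ht)).sub_const 1 using 3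
  push_cast
  ring

lemma tendsto_Gc_nhdsWithin_upper (ht : t ∈ Ioo 0 1) :
    Tendsto Gc (𝓝[{z | 0 < z.im}] ((-t : ℝ) : ℂ))
      (𝓝 ((-(t : ℂ)) * (1 - t) * ((1 - t) * (Real.log ((1 - t) / t) - π * I) - 1))⁻¹) := by
  have hz : Tendsto (fun z : ℂ => z) (𝓝[{z | 0 < z.im}] ((-t : ℝ) : ℂ)) (𝓝 (-t : ℝ)) :=
    tendsto_id.mono_left nhdsWithin_le_nhds
  have hbracket : ((1 : ℂ) - t) * (Real.log ((1 - t) / t) - π * I) - 1 ≠ 0 := by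
    have him : (((1 : ℂ) - t) * (Real.log ((1 - t) / t) - π * I) - 1).im = -((1 - t) * π) := by
      simp
    intro h
    rw [h, zero_im, zero_eq_neg] at him
    exact mul_ne_zero (sub_ne_zero.2 ht.2.ne') pi_ne_zero him
  have hden : Tendsto (fun z => z * (z + 1) * logBracket z) (𝓝[{z | 0 < z.im}] ((-t : ℝ) : ℂ))
      (𝓝 ((-(t : ℂ)) * (1 - t) * ((1 - t) * (Real.log ((1 - t) / t) - π * I) - 1))) := by
    convert (hz.mul (hz.add_const 1)).mul (tendsto_logBracket_nhdsWithin_upper ht) using 2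
    push_cast
    ring
  exact hden.inv₀ (mul_ne_zero (mul_ne_zero (neg_ne_zero.2 (ofReal_ne_zero.2 ht.1.ne'))
    (sub_ne_zero.2 (ofReal_ne_one.2 ht.2.ne).symm)) hbracket)

lemma im_inv_boundaryValue (L : ℝ) (ht0 : t ≠ 0) (ht1 : 1 - t ≠ 0) :
    ((-(t : ℂ)) * (1 - t) * ((1 - t) * (L - π * I) - 1))⁻¹.im
      = -π * (t * ((1 - t) * L - 1) ^ 2 + π ^ 2 * t * (1 - t) ^ 2)⁻¹ := by
  have h : (-(t : ℂ)) * (1 - t) * ((1 - t) * (L - π * I) - 1)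
      = ((-t * (1 - t) * ((1 - t) * L - 1) : ℝ) : ℂ) + ((t * (1 - t) ^ 2 * π : ℝ) : ℂ) * I := by
    push_cast; ring
  rw [h, inv_im, normSq_add_mul_I, add_im, ofReal_im, im_ofReal_mul, I_im]
  field_simp
  ring

end Boundary

/-- `G` is holomorphic on `ℂ ∖ [−1,0]` and, for `0 < t < 1`,
`Im G(−t + iy) → −π·τ₀(t)` as `y → 0⁺`. -/
theorem Gc_holomorphic_and_boundary_imaginary_part :
    DifferentiableOn ℂ Gc ((Complex.ofReal '' Set.Icc (-1 : ℝ) 0)ᶜ) ∧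
    ∀ t : ℝ, t ∈ Set.Ioo (0 : ℝ) 1 →
      Filter.Tendsto (fun y : ℝ => (Gc (-(t : ℂ) + (y : ℂ) * Complex.I)).im)
        (nhdsWithin 0 (Set.Ioi 0)) (nhds (-Real.pi * tau0 t)) := by
  refine ⟨differentiableOn_Gc, fun t ht => ?_⟩
  have hG := (tendsto_Gc_nhdsWithin_upper ht).comp (tendsto_ofReal_add_mul_I (-t))
  rw [ofReal_neg] at hG
  have hval : -π * tau0 t = _ :=
    (im_inv_boundaryValue (Real.log ((1 - t) / t)) ht.1.ne' (sub_ne_zero.2 ht.2.ne')).symm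
  rw [hval]
  exact (continuous_im.tendsto _).comp hG
end

section
/- Let G(z) = 1/( z(z+1)[(z+1)·Log(1 + 1/z) − 1] ), where Log is the principal branch of the complex logarithm, a holomorphic function on ℂ ∖ [−1, 0]. Then lim_{y→0⁺} iy·G(iy) = 0 and lim_{y→0⁺} iy·G(−1 + iy) = 1. -/
/-!
Both limits hold in full punctured neighbourhoods, not only along vertical rays.
Near `0`, `‖Log w‖ ≥ log ‖w‖` with `w = 1 + 1/z → ∞`, so the denominator of
`z G(z) = 1 / ((z+1)((z+1) Log(1 + 1/z) - 1))` blows up. Near `-1`, `w = 1 + 1/z → 0` and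
`(z+1) Log w = z · (w Log w) → 0` because `‖Log w‖ ≤ |log ‖w‖| + π`; hence
`(z+1) G(z) = 1 / (z((z+1) Log w - 1)) → 1 / ((-1)(-1)) = 1`.
-/

open Filter Topology Bornology

lemma Filter.Tendsto.mul_cobounded {α 𝕜 : Type*} [NormedDivisionRing 𝕜] {l : Filter α}
    {f g : α → 𝕜} {c : 𝕜} (hf : Tendsto f l (𝓝 c)) (hc : c ≠ 0)
    (hg : Tendsto g l (cobounded 𝕜)) : Tendsto (fun x => f x * g x) l (cobounded 𝕜) := by
  rw [← tendsto_norm_atTop_iff_cobounded] at hg ⊢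
  simpa only [norm_mul] using hf.norm.pos_mul_atTop (norm_pos_iff.2 hc) hg

namespace Complex

lemma log_norm_le_norm_log (z : ℂ) : Real.log ‖z‖ ≤ ‖log z‖ := by
  rw [← log_re]
  exact (le_abs_self _).trans (abs_re_le_norm _)

lemma norm_log_le (z : ℂ) : ‖log z‖ ≤ |Real.log ‖z‖| + Real.pi :=
  calc ‖log z‖ ≤ |(log z).re| + |(log z).im| := norm_le_abs_re_add_abs_im _
    _ ≤ |Real.log ‖z‖| + Real.pi := by rw [log_re, log_im]; gcongr; exact abs_arg_le_pi z

lemma tendsto_log_cobounded : Tendsto log (cobounded ℂ) (cobounded ℂ) := by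
  rw [← tendsto_norm_atTop_iff_cobounded]
  exact tendsto_atTop_mono log_norm_le_norm_log
    (Real.tendsto_log_atTop.comp tendsto_norm_cobounded_atTop)

lemma tendsto_mul_log_nhds_zero : Tendsto (fun z => z * log z) (𝓝 0) (𝓝 0) := by
  rw [tendsto_zero_iff_norm_tendsto_zero]
  have hbound : Tendsto (fun z : ℂ => |‖z‖ * Real.log ‖z‖| + ‖z‖ * Real.pi) (𝓝 0) (𝓝 0) := by
    have hcont : Continuous (fun z : ℂ => |‖z‖ * Real.log ‖z‖| + ‖z‖ * Real.pi) :=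
      (Real.continuous_mul_log.comp continuous_norm).abs.add (continuous_norm.mul continuous_const)
    simpa using hcont.tendsto 0
  refine squeeze_zero (fun _ => norm_nonneg _) (fun z => ?_) hbound
  rw [norm_mul, abs_mul, abs_norm, ← mul_add]
  exact mul_le_mul_of_nonneg_left (norm_log_le z) (norm_nonneg z)

lemma tendsto_add_ofReal_mul_I_nhdsGT_zero (c : ℂ) :
    Tendsto (fun y : ℝ => c + y * I) (𝓝[>] 0) (𝓝[≠] c) := by
  apply tendsto_nhdsWithin_of_tendsto_nhds_of_eventually_within
  · have : Continuous (fun y : ℝ => c + y * I) := by fun_prop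
    simpa using (this.tendsto 0).mono_left nhdsWithin_le_nhds
  · filter_upwards [self_mem_nhdsWithin] with y (hy : 0 < y)
    simp [hy.ne']

end Complex

open Complex

lemma mul_Gc {z : ℂ} (hz : z ≠ 0) :
    z * Gc z = ((z + 1) * ((z + 1) * log (1 + 1 / z) - 1))⁻¹ := by
  rw [Gc, mul_assoc, mul_inv, ← mul_assoc, mul_inv_cancel₀ hz, one_mul]

lemma add_one_mul_Gc {z : ℂ} (hz : z + 1 ≠ 0) :
    (z + 1) * Gc z = (z * ((z + 1) * log (1 + 1 / z) - 1))⁻¹ := by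
  rw [Gc, mul_comm z, mul_assoc, mul_inv, ← mul_assoc, mul_inv_cancel₀ hz, one_mul]

lemma tendsto_mul_Gc_nhdsNE_zero : Tendsto (fun z => z * Gc z) (𝓝[≠] 0) (𝓝 0) := by
  have hz1 : Tendsto (fun z : ℂ => z + 1) (𝓝[≠] 0) (𝓝 1) :=
    ((continuous_add_const (1 : ℂ)).tendsto' 0 1 (zero_add 1)).mono_left nhdsWithin_le_nhds
  have hlog : Tendsto (fun z : ℂ => log (1 + 1 / z)) (𝓝[≠] 0) (cobounded ℂ) := by
    simpa only [one_div, Function.comp_def] using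
      tendsto_log_cobounded.comp ((tendsto_const_add_cobounded 1).comp tendsto_inv₀_nhdsNE_zero)
  have hden := hz1.mul_cobounded one_ne_zero
    ((tendsto_sub_const_cobounded 1).comp (hz1.mul_cobounded one_ne_zero hlog))
  refine (tendsto_inv₀_cobounded.comp hden).congr' ?_
  filter_upwards [self_mem_nhdsWithin] with z hz
  exact (mul_Gc hz).symm

lemma tendsto_add_one_mul_Gc_nhdsNE_neg_one :
    Tendsto (fun z => (z + 1) * Gc z) (𝓝[≠] (-1)) (𝓝 1) := by
  have hw : Tendsto (fun z : ℂ => 1 + 1 / z) (𝓝 (-1)) (𝓝 0) := by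
    have : ContinuousAt (fun z : ℂ => 1 + 1 / z) (-1) := by fun_prop (disch := norm_num)
    simpa using this.tendsto
  have hmul : Tendsto (fun z : ℂ => (z + 1) * log (1 + 1 / z)) (𝓝 (-1)) (𝓝 0) := by
    have := (tendsto_id (x := 𝓝 (-1 : ℂ))).mul (tendsto_mul_log_nhds_zero.comp hw)
    rw [mul_zero] at this
    refine this.congr' ?_
    filter_upwards [eventually_ne_nhds (neg_ne_zero.2 one_ne_zero)] with z hz
    simp only [id, Function.comp_apply]
    rw [← mul_assoc, mul_add, mul_one, mul_one_div_cancel hz]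
  have hden : Tendsto (fun z : ℂ => z * ((z + 1) * log (1 + 1 / z) - 1)) (𝓝 (-1)) (𝓝 1) := by
    simpa using (tendsto_id (x := 𝓝 (-1 : ℂ))).mul (hmul.sub_const 1)
  have hinv : Tendsto (fun z : ℂ => (z * ((z + 1) * log (1 + 1 / z) - 1))⁻¹) (𝓝 (-1)) (𝓝 1) := by
    simpa using hden.inv₀ one_ne_zero
  refine (hinv.mono_left nhdsWithin_le_nhds).congr' ?_
  filter_upwards [self_mem_nhdsWithin] with z hz
  exact (add_one_mul_Gc fun h => hz (eq_neg_of_add_eq_zero_left h)).symm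

/-- `iy·G(iy) → 0` and `iy·G(−1 + iy) → 1` as `y → 0⁺`. -/
theorem Gc_no_mass_at_zero_mass_one_at_minus_one :
    Filter.Tendsto (fun y : ℝ => ((y : ℂ) * Complex.I) * Gc ((y : ℂ) * Complex.I))
      (nhdsWithin 0 (Set.Ioi 0)) (nhds 0) ∧
    Filter.Tendsto (fun y : ℝ => ((y : ℂ) * Complex.I) * Gc (-1 + (y : ℂ) * Complex.I))
      (nhdsWithin 0 (Set.Ioi 0)) (nhds 1) := by
  constructor
  · simpa [Function.comp_def] using
      tendsto_mul_Gc_nhdsNE_zero.comp (tendsto_add_ofReal_mul_I_nhdsGT_zero 0)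
  · simpa [Function.comp_def] using
      tendsto_add_one_mul_Gc_nhdsNE_neg_one.comp (tendsto_add_ofReal_mul_I_nhdsGT_zero (-1))
end
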